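/- Let H be Hermitian on H = (ℂ²)^{⊗k} with H = J Z^{⊗k}, J > 0, and suppose H′ is a k′-local Hermitian operator on H ⊗ A (acting k′-locally with respect to the qubit sites of H and sites of A), k′ < k. Suppose there exist a nonzero orthogonal projector P on A and a unitary U on H ⊗ A with ‖U − I‖ ≤ η and ‖P′ H′ P′ − U(H ⊗ P)U†‖ ≤ ε, where P′ = U(I ⊗ P)U†. If ε < 2^{−k′} J, then ‖H′‖ ≥ (2^{−k′} J − ε) / (2η). -/

import Mathlib

/-- Basis labels for a system of `k` qubits together with `a` ancilla sites of local
dimension `q`. -/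
abbrev GBasis (k a q : ℕ) := (Fin k → Fin 2) × (Fin a → Fin q)

/-- A matrix on the joint system is supported on the sites `S₁` (qubits) and `S₂` (ancilla
sites) if it acts as the identity on all other sites. -/
def SupportedOn {k a q : ℕ} (S₁ : Finset (Fin k)) (S₂ : Finset (Fin a))
    (M : Matrix (GBasis k a q) (GBasis k a q) ℂ) : Prop :=
  (∀ x y : GBasis k a q,
    ((∃ j ∉ S₁, x.1 j ≠ y.1 j) ∨ (∃ j ∉ S₂, x.2 j ≠ y.2 j)) → M x y = 0) ∧
  (∀ x y x' y' : GBasis k a q,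
    (∀ j ∈ S₁, x.1 j = x'.1 j) → (∀ j ∈ S₂, x.2 j = x'.2 j) →
    (∀ j ∈ S₁, y.1 j = y'.1 j) → (∀ j ∈ S₂, y.2 j = y'.2 j) →
    (∀ j ∉ S₁, x.1 j = y.1 j) → (∀ j ∉ S₂, x.2 j = y.2 j) →
    (∀ j ∉ S₁, x'.1 j = y'.1 j) → (∀ j ∉ S₂, x'.2 j = y'.2 j) → M x y = M x' y')

/-- A matrix on the joint system is `k′`-local if it is a finite sum of terms, each acting
nontrivially on at most `k′` sites (qubits and ancilla sites together). -/
def IsKLocalOp {k a q : ℕ} (k' : ℕ) (M : Matrix (GBasis k a q) (GBasis k a q) ℂ) : Prop :=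
  ∃ (m : ℕ) (T : Fin m → Matrix (GBasis k a q) (GBasis k a q) ℂ)
    (S₁ : Fin m → Finset (Fin k)) (S₂ : Fin m → Finset (Fin a)),
    (∀ i, (S₁ i).card + (S₂ i).card ≤ k') ∧
    (∀ i, SupportedOn (S₁ i) (S₂ i) (T i)) ∧ M = ∑ i, T i

/-! Conjugation by `U` moves `H'` by at most `2‖U - 1‖‖H'‖`, so the gadget condition gives
`‖(1 ⊗ P) H' (1 ⊗ P) - H ⊗ P‖ ≤ ε + 2η‖H'‖`. Testing this on the product vectors `e_x ⊗ c`
with `P c = c` shows that the diagonal values `f x = ⟪e_x ⊗ c, H' (e_x ⊗ c)⟫` stay within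
`(ε + 2η‖H'‖)‖c‖²` of `J χ(x) ‖c‖²`, where `χ` is the parity character of `{0,1}^k`.
A term acting on at most `k' < k` sites leaves some qubit alone, so its diagonal values are
invariant under flipping that qubit and hence orthogonal to `χ`. Pairing with `χ` then forces
`|J| ≤ ε + 2η‖H'‖`, which is stronger than the claimed bound. -/

open scoped InnerProductSpace Kronecker Matrix.Norms.L2Operator
open Matrix

section CStarRing

variable {A : Type*} [NormedRing A] [StarRing A] [CStarRing A]

theorem norm_sub_star_mul_mul_le {u : A} (hu : u ∈ unitary A) (x : A) :
    ‖x - star u * x * u‖ ≤ 2 * ‖u - 1‖ * ‖x‖ := by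
  have hx : x - star u * x * u = star u * ((u - 1) * x - x * (u - 1)) := by
    simp only [mul_sub, sub_mul, ← mul_assoc, Unitary.star_mul_self_of_mem hu, one_mul, mul_one]
    abel
  rw [hx, CStarRing.norm_mem_unitary_mul _ (Unitary.star_mem hu)]
  calc ‖(u - 1) * x - x * (u - 1)‖ ≤ ‖(u - 1) * x‖ + ‖x * (u - 1)‖ := norm_sub_le _ _
    _ ≤ ‖u - 1‖ * ‖x‖ + ‖x‖ * ‖u - 1‖ := add_le_add (norm_mul_le _ _) (norm_mul_le _ _)
    _ = 2 * ‖u - 1‖ * ‖x‖ := by ring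

theorem norm_compress_sub_le {q u : A} (hq : IsStarProjection q) (hu : u ∈ unitary A)
    (x y : A) :
    ‖q * x * q - y‖ ≤
      ‖u * q * star u * x * (u * q * star u) - u * y * star u‖ + 2 * ‖u - 1‖ * ‖x‖ := by
  have hcancel : ∀ z : A, z * star u * u = z := fun z => by
    rw [mul_assoc, Unitary.star_mul_self_of_mem hu, mul_one]
  have hsplit : q * x * q - y = q * (x - star u * x * u) * q +
      star u * (u * q * star u * x * (u * q * star u) - u * y * star u) * u := by
    simp only [mul_sub, sub_mul, ← mul_assoc, Unitary.star_mul_self_of_mem hu, one_mul, hcancel]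
    abel
  have hq1 : ‖q‖ ≤ 1 := hq.norm_le
  set z := u * q * star u * x * (u * q * star u) - u * y * star u
  have hconj : ‖star u * z * u‖ = ‖z‖ := by
    rw [CStarRing.norm_mul_mem_unitary _ hu,
      CStarRing.norm_mem_unitary_mul _ (Unitary.star_mem hu)]
  have hproj : ‖q * (x - star u * x * u) * q‖ ≤ ‖x - star u * x * u‖ :=
    calc ‖q * (x - star u * x * u) * q‖ ≤ ‖q‖ * ‖x - star u * x * u‖ * ‖q‖ := norm_mul₃_le
      _ ≤ 1 * ‖x - star u * x * u‖ * 1 := by gcongr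
      _ = ‖x - star u * x * u‖ := by ring
  calc ‖q * x * q - y‖ ≤ ‖q * (x - star u * x * u) * q‖ + ‖star u * z * u‖ := by
        rw [hsplit]; exact norm_add_le _ _
    _ ≤ ‖z‖ + 2 * ‖u - 1‖ * ‖x‖ := by
        rw [hconj, add_comm ‖z‖]; gcongr; exact hproj.trans (norm_sub_star_mul_mul_le hu x)

end CStarRing

section Operator

variable {E : Type*} [NormedAddCommGroup E] [InnerProductSpace ℂ E] [CompleteSpace E]

theorem norm_inner_sub_le_of_compress {q y : E →L[ℂ] E} (hq : IsSelfAdjoint q) {v : E}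
    (hqv : q v = v) {μ : ℂ} (hyv : y v = μ • v) (x : E →L[ℂ] E) :
    ‖⟪v, x v⟫_ℂ - μ * (‖v‖ : ℂ) ^ 2‖ ≤ ‖q * x * q - y‖ * ‖v‖ ^ 2 := by
  have hform : ⟪v, (q * x * q - y) v⟫_ℂ = ⟪v, x v⟫_ℂ - μ * (‖v‖ : ℂ) ^ 2 := by
    have hsymm : ⟪v, q (x v)⟫_ℂ = ⟪q v, x v⟫_ℂ := (hq.isSymmetric v (x v)).symm
    simp only [_root_.sub_apply, inner_sub_right, mul_apply_eq_comp, hqv,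
      hsymm, hyv, inner_smul_right, inner_self_eq_norm_sq_to_K]
    rfl
  rw [← hform]
  calc ‖⟪v, (q * x * q - y) v⟫_ℂ‖ ≤ ‖v‖ * ‖(q * x * q - y) v‖ := norm_inner_le_norm _ _
    _ ≤ ‖v‖ * (‖q * x * q - y‖ * ‖v‖) := by gcongr; exact ContinuousLinearMap.le_opNorm _ _
    _ = ‖q * x * q - y‖ * ‖v‖ ^ 2 := by ring

end Operator

theorem Matrix.exists_ne_zero_mulVec_eq_self {n R : Type*} [Fintype n] [Semiring R]
    {P : Matrix n n R} (hP : IsIdempotentElem P) (hP0 : P ≠ 0) : ∃ c, c ≠ 0 ∧ P *ᵥ c = c := by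
  obtain ⟨s, t, hst⟩ : ∃ s t, P s t ≠ 0 := by
    by_contra! h
    exact hP0 (Matrix.ext h)
  refine ⟨fun s => P s t, Function.ne_iff.2 ⟨s, hst⟩, funext fun s => ?_⟩
  simpa [mulVec, dotProduct, mul_apply] using congrFun (congrFun hP s) t

theorem IsStarProjection.kronecker {l n R : Type*} [Fintype l] [Fintype n] [CommRing R]
    [StarRing R] {A : Matrix l l R} {B : Matrix n n R} (hA : IsStarProjection A)
    (hB : IsStarProjection B) : IsStarProjection (A ⊗ₖ B) where
  isIdempotentElem := by
    rw [IsIdempotentElem, ← mul_kronecker_mul, hA.isIdempotentElem.eq, hB.isIdempotentElem.eq]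
  isSelfAdjoint := by
    rw [IsSelfAdjoint, star_eq_conjTranspose, conjTranspose_kronecker,
      ← star_eq_conjTranspose, ← star_eq_conjTranspose, hA.isSelfAdjoint.star_eq,
      hB.isSelfAdjoint.star_eq]

section ProdVec

variable {ι κ : Type*} [DecidableEq ι]

def prodVec (x : ι) (c : κ → ℂ) : EuclideanSpace ℂ (ι × κ) :=
  WithLp.toLp 2 fun z => if z.1 = x then c z.2 else 0

theorem prodVec_ne_zero (x : ι) {c : κ → ℂ} (hc : c ≠ 0) : prodVec x c ≠ 0 := by
  obtain ⟨s, hs⟩ := Function.ne_iff.1 hc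
  intro h
  have := congrArg (fun v : EuclideanSpace ℂ (ι × κ) => v (x, s)) h
  simp [prodVec] at this
  exact hs this

variable [Fintype ι] [Fintype κ] [DecidableEq κ]

theorem toEuclideanCLM_diagonal_kronecker_prodVec (d : ι → ℂ) (B : Matrix κ κ ℂ) (x : ι)
    (c : κ → ℂ) :
    toEuclideanCLM (𝕜 := ℂ) (diagonal d ⊗ₖ B) (prodVec x c) = d x • prodVec x (B *ᵥ c) := by
  ext ⟨y, s⟩
  by_cases hy : y = x
  · subst hy
    simp [prodVec, mulVec, dotProduct, Fintype.sum_prod_type, diagonal_apply, Finset.mul_sum,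
      mul_assoc]
  · simp [prodVec, mulVec, dotProduct, Fintype.sum_prod_type, diagonal_apply, hy]

theorem inner_prodVec_toEuclideanCLM (M : Matrix (ι × κ) (ι × κ) ℂ) (x : ι) (c : κ → ℂ) :
    ⟪prodVec x c, toEuclideanCLM (𝕜 := ℂ) M (prodVec x c)⟫_ℂ =
      M.submatrix (Prod.mk x) (Prod.mk x) *ᵥ c ⬝ᵥ star c := by
  simp [EuclideanSpace.inner_eq_star_dotProduct, prodVec, mulVec, dotProduct,
    Fintype.sum_prod_type, apply_ite (starRingEnd ℂ), mul_ite, Finset.sum_ite_irrel]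

theorem norm_inner_prodVec_sub_le {P : Matrix κ κ ℂ} (hP : IsStarProjection P) {c : κ → ℂ}
    (hPc : P *ᵥ c = c) (d : ι → ℂ) (M : Matrix (ι × κ) (ι × κ) ℂ) (x : ι) :
    ‖⟪prodVec x c, toEuclideanCLM (𝕜 := ℂ) M (prodVec x c)⟫_ℂ - d x * (‖prodVec x c‖ : ℂ) ^ 2‖ ≤
      ‖1 ⊗ₖ P * M * (1 ⊗ₖ P) - diagonal d ⊗ₖ P‖ * ‖prodVec x c‖ ^ 2 := by
  have hQv : toEuclideanCLM (𝕜 := ℂ) (1 ⊗ₖ P) (prodVec x c) = prodVec x c := by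
    simpa [hPc] using toEuclideanCLM_diagonal_kronecker_prodVec 1 P x c
  have hDv : toEuclideanCLM (𝕜 := ℂ) (diagonal d ⊗ₖ P) (prodVec x c) = d x • prodVec x c := by
    rw [toEuclideanCLM_diagonal_kronecker_prodVec, hPc]
  have hQ : IsStarProjection ((1 : Matrix ι ι ℂ) ⊗ₖ P) := .kronecker (.one _) hP
  have h := norm_inner_sub_le_of_compress (hQ.isSelfAdjoint.map _) hQv hDv
    (toEuclideanCLM (𝕜 := ℂ) M)
  rwa [← map_mul, ← map_mul, ← map_sub] at h

end ProdVec

section Parity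

variable {k : ℕ}

def parity (x : Fin k → Fin 2) : ℂ := ∏ j, if x j = 0 then 1 else -1

theorem parity_add_single (x : Fin k → Fin 2) (j : Fin k) :
    parity (x + Pi.single j 1) = -parity x := by
  unfold parity
  rw [Fintype.prod_eq_mul_prod_compl j, Fintype.prod_eq_mul_prod_compl j]
  have hflip : (if (x + Pi.single j 1 : Fin k → Fin 2) j = 0 then (1 : ℂ) else -1) =
      -(if x j = 0 then 1 else -1) := by
    simp only [Pi.add_apply, Pi.single_eq_same]
    generalize x j = b
    fin_cases b <;> simp
  rw [hflip, neg_mul]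
  congr 2
  refine Finset.prod_congr rfl fun i hi => ?_
  rw [Pi.add_apply, Pi.single_eq_of_ne (by simpa using hi), add_zero]

theorem parity_mul_self (x : Fin k → Fin 2) : parity x * parity x = 1 := by
  rw [parity, ← Finset.prod_mul_distrib]
  exact Finset.prod_eq_one fun j _ => by split_ifs <;> norm_num

theorem norm_parity (x : Fin k → Fin 2) : ‖parity x‖ = 1 := by
  rw [parity, norm_prod]
  exact Finset.prod_eq_one fun j _ => by split_ifs <;> simp

theorem sum_parity_mul_eq_zero {f : (Fin k → Fin 2) → ℂ} (j : Fin k)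
    (hf : ∀ x, f (x + Pi.single j 1) = f x) : ∑ x, parity x * f x = 0 := by
  have hflip := Equiv.sum_comp (Equiv.addRight (Pi.single j 1 : Fin k → Fin 2))
    fun x => parity x * f x
  simp only [Equiv.coe_addRight, parity_add_single, hf, neg_mul, Finset.sum_neg_distrib] at hflip
  linear_combination -hflip / 2

theorem abs_le_of_sum_parity_mul_eq_zero {f : (Fin k → Fin 2) → ℂ}
    (hf : ∑ x, parity x * f x = 0) {J δ : ℝ} {C : (Fin k → Fin 2) → ℝ} (hC : ∀ x, 0 < C x)
    (hfC : ∀ x, ‖f x - J * parity x * C x‖ ≤ δ * C x) : |J| ≤ δ := by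
  have hsum : ∑ x, parity x * (f x - J * parity x * C x) = -(J * ∑ x, C x : ℝ) := by
    simp only [mul_sub, Finset.sum_sub_distrib, hf, zero_sub]
    push_cast
    rw [Finset.mul_sum]
    congr 1
    refine Finset.sum_congr rfl fun x _ => ?_
    linear_combination (J * C x : ℂ) * parity_mul_self x
  have hbound : |J| * ∑ x, C x ≤ δ * ∑ x, C x :=
    calc |J| * ∑ x, C x = ‖∑ x, parity x * (f x - J * parity x * C x)‖ := by
          rw [hsum, norm_neg, Complex.norm_real, Real.norm_eq_abs, abs_mul,
            abs_of_pos (Finset.sum_pos (fun x _ => hC x) Finset.univ_nonempty)]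
      _ ≤ ∑ x, ‖parity x * (f x - J * parity x * C x)‖ := norm_sum_le _ _
      _ ≤ ∑ x, δ * C x := Finset.sum_le_sum fun x _ => by
          rw [norm_mul, norm_parity, one_mul]; exact hfC x
      _ = δ * ∑ x, C x := (Finset.mul_sum _ _ _).symm
  exact le_of_mul_le_mul_right hbound (Finset.sum_pos (fun x _ => hC x) Finset.univ_nonempty)

end Parity

theorem SupportedOn.submatrix_prodMk_eq {k a q : ℕ} {S₁ : Finset (Fin k)} {S₂ : Finset (Fin a)}
    {T : Matrix (GBasis k a q) (GBasis k a q) ℂ} (hT : SupportedOn S₁ S₂ T)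
    {x x' : Fin k → Fin 2} (hx : ∀ j ∈ S₁, x j = x' j) :
    T.submatrix (Prod.mk x) (Prod.mk x) = T.submatrix (Prod.mk x') (Prod.mk x') := by
  ext s t
  by_cases hst : ∀ j ∉ S₂, s j = t j
  · exact hT.2 (x, s) (x, t) (x', s) (x', t) hx (fun _ _ => rfl) hx (fun _ _ => rfl)
      (fun _ _ => rfl) hst (fun _ _ => rfl) hst
  · push Not at hst
    simp only [submatrix_apply, hT.1 (x, s) (x, t) (Or.inr hst),
      hT.1 (x', s) (x', t) (Or.inr hst)]

theorem IsKLocalOp.sum_parity_mul_inner_prodVec_eq_zero {k a q k' : ℕ}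
    {M : Matrix (GBasis k a q) (GBasis k a q) ℂ} (hM : IsKLocalOp k' M) (hk : k' < k)
    (c : (Fin a → Fin q) → ℂ) :
    ∑ x, parity x * ⟪prodVec x c, toEuclideanCLM (𝕜 := ℂ) M (prodVec x c)⟫_ℂ = 0 := by
  obtain ⟨m, T, S₁, S₂, hcard, hsupp, rfl⟩ := hM
  simp only [map_sum, _root_.sum_apply, inner_sum, Finset.mul_sum]
  rw [Finset.sum_comm]
  refine Finset.sum_eq_zero fun i _ => ?_
  obtain ⟨j, -, hj⟩ : ∃ j ∈ Finset.univ, j ∉ S₁ i :=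
    Finset.exists_mem_notMem_of_card_lt_card <| by
      rw [Finset.card_univ, Fintype.card_fin]; have := hcard i; omega
  refine sum_parity_mul_eq_zero j fun x => ?_
  rw [inner_prodVec_toEuclideanCLM, inner_prodVec_toEuclideanCLM,
    (hsupp i).submatrix_prodMk_eq fun l hl => ?_]
  simp [show l ≠ j by rintro rfl; exact hj hl]

theorem stmt19_general {k k' a q : ℕ} (hkk' : k' < k) (J η ε : ℝ)
    (Zk : Matrix (Fin k → Fin 2) (Fin k → Fin 2) ℂ)
    (hZk : Zk = Matrix.diagonal fun x => ∏ j, (if x j = 0 then (1 : ℂ) else -1))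
    (H : Matrix (Fin k → Fin 2) (Fin k → Fin 2) ℂ) (hHdef : H = (J : ℂ) • Zk)
    (H' : Matrix (GBasis k a q) (GBasis k a q) ℂ)
    (hloc : IsKLocalOp k' H')
    (P : Matrix (Fin a → Fin q) (Fin a → Fin q) ℂ)
    (hPh : P.IsHermitian) (hPi : P * P = P) (hP0 : P ≠ 0)
    (U : Matrix (GBasis k a q) (GBasis k a q) ℂ)
    (hU : U * U.conjTranspose = 1 ∧ U.conjTranspose * U = 1)
    (hUclose : ‖Matrix.toEuclideanCLM (𝕜 := ℂ) (n := GBasis k a q) (U - 1)‖ ≤ η)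
    (P' : Matrix (GBasis k a q) (GBasis k a q) ℂ)
    (hP' : P' = U * (Matrix.of fun x y : GBasis k a q =>
        (if x.1 = y.1 then 1 else 0) * P x.2 y.2) * U.conjTranspose)
    (hε : ‖Matrix.toEuclideanCLM (𝕜 := ℂ) (n := GBasis k a q) (P' * H' * P' -
        U * (Matrix.of fun x y : GBasis k a q => H x.1 y.1 * P x.2 y.2) *
          U.conjTranspose)‖ ≤ ε) :
    ((2 : ℝ) ^ (-(k' : ℤ)) * J - ε) / (2 * η) ≤
      ‖Matrix.toEuclideanCLM (𝕜 := ℂ) (n := GBasis k a q) H'‖ := by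
  -- for the L2 operator norm on matrices, `‖M‖` is by definition `‖toEuclideanCLM M‖`
  change _ ≤ ‖H'‖
  change ‖U - 1‖ ≤ η at hUclose
  have hHdiag : H = diagonal fun x => (J * parity x : ℂ) := by
    rw [hHdef, hZk, ← diagonal_smul]; rfl
  have hUu : U ∈ unitary (Matrix (GBasis k a q) (GBasis k a q) ℂ) :=
    Unitary.mem_iff.2 ⟨hU.2, hU.1⟩
  have hP : IsStarProjection P := ⟨hPi, hPh⟩
  have hδ : ‖(1 : Matrix (Fin k → Fin 2) _ ℂ) ⊗ₖ P * H' * (1 ⊗ₖ P) - H ⊗ₖ P‖ ≤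
      ε + 2 * η * ‖H'‖ := by
    refine (norm_compress_sub_le (.kronecker (.one _) hP) hUu H' (H ⊗ₖ P)).trans
      (add_le_add ?_ ?_)
    · subst hP'; exact hε
    · gcongr
  obtain ⟨c, hc0, hPc⟩ := exists_ne_zero_mulVec_eq_self hPi hP0
  have hJ : |J| ≤ ε + 2 * η * ‖H'‖ := by
    refine abs_le_of_sum_parity_mul_eq_zero (hloc.sum_parity_mul_inner_prodVec_eq_zero hkk' c)
      (C := fun x => ‖prodVec x c‖ ^ 2) (fun x => by positivity [prodVec_ne_zero x hc0])
      fun x => ?_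
    have hx := norm_inner_prodVec_sub_le hP hPc (fun x => J * parity x) H' x
    rw [← hHdiag] at hx
    push_cast
    exact hx.trans (by gcongr)
  have hη : 0 ≤ η := (norm_nonneg _).trans hUclose
  have hscale : (2 : ℝ) ^ (-(k' : ℤ)) * J ≤ |J| :=
    (mul_le_mul_of_nonneg_left (le_abs_self J) (by positivity)).trans
      (mul_le_of_le_one_left (abs_nonneg J) (zpow_le_one_of_nonpos₀ one_le_two (by simp)))
  exact div_le_of_le_mul₀ (by positivity) (norm_nonneg _) (by linarith)

/-- Gadget energy scaling: if `(H′, A)` is a `(η, ε)`-gadget for `H = J Z^{⊗k}` with `H′` a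
`k′`-local Hamiltonian, `k′ < k`, and `ε < 2^{−k′} J`, then `‖H′‖ ≥ (2^{−k′} J − ε)/(2η)`. -/
theorem stmt19 {k k' a q : ℕ} (hkk' : k' < k) (J η ε : ℝ) (hJ : 0 < J) (hη : 0 < η)
    (Zk : Matrix (Fin k → Fin 2) (Fin k → Fin 2) ℂ)
    (hZk : Zk = Matrix.diagonal fun x => ∏ j, (if x j = 0 then (1 : ℂ) else -1))
    (H : Matrix (Fin k → Fin 2) (Fin k → Fin 2) ℂ) (hHdef : H = (J : ℂ) • Zk)
    (H' : Matrix (GBasis k a q) (GBasis k a q) ℂ) (hH'h : H'.IsHermitian)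
    (hloc : IsKLocalOp k' H')
    (P : Matrix (Fin a → Fin q) (Fin a → Fin q) ℂ)
    (hPh : P.IsHermitian) (hPi : P * P = P) (hP0 : P ≠ 0)
    (U : Matrix (GBasis k a q) (GBasis k a q) ℂ)
    (hU : U * U.conjTranspose = 1 ∧ U.conjTranspose * U = 1)
    (hUclose : ‖Matrix.toEuclideanCLM (𝕜 := ℂ) (n := GBasis k a q) (U - 1)‖ ≤ η)
    (P' : Matrix (GBasis k a q) (GBasis k a q) ℂ)
    (hP' : P' = U * (Matrix.of fun x y : GBasis k a q =>
        (if x.1 = y.1 then 1 else 0) * P x.2 y.2) * U.conjTranspose)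
    (hε : ‖Matrix.toEuclideanCLM (𝕜 := ℂ) (n := GBasis k a q) (P' * H' * P' -
        U * (Matrix.of fun x y : GBasis k a q => H x.1 y.1 * P x.2 y.2) *
          U.conjTranspose)‖ ≤ ε)
    (hεsmall : ε < (2 : ℝ) ^ (-(k' : ℤ)) * J) :
    ((2 : ℝ) ^ (-(k' : ℤ)) * J - ε) / (2 * η) ≤
      ‖Matrix.toEuclideanCLM (𝕜 := ℂ) (n := GBasis k a q) H'‖ :=
  stmt19_general hkk' J η ε Zk hZk H hHdef H' hloc P hPh hPi hP0 U hU hUclose P' hP' hε
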